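/- arXiv:1308.6753 — 3 statements merged into one kernel-verified Lean document; each statement's English description precedes it below -/
import Mathlib

section
/- Thermodynamic integration identity for geometric paths: log(z₁/z₀) = ∫₀¹ ∫_Θ p_t(θ) log(q₁(θ)/q₀(θ)) dν(θ) dt, where p_t is the normalized geometric-path density; i.e., the log-ratio of the normalizing constants equals the integral over temperatures t ∈ [0,1] of the expectation under p_t of log(q₁/q₀). -/
/-!
Since `log (q₁/q₀) = log (z₁/z₀) + log (p₁/p₀)` and each `p_t` is a probability density, it
suffices to show `∫₀¹ E_{p_t}[log (p₁/p₀)] dt = 0`. Differentiating `μ(t) = ∫ p₁^t p₀^(1-t)` under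
the integral sign (dominated on `[a+δ, b-δ]` by `δ⁻¹ (p₁^a p₀^(1-a) + p₁^b p₀^(1-b))`) gives
`μ'(t) = ∫ p₁^t p₀^(1-t) log (p₁/p₀)`, so the integrand is `(log μ)'(t)`, and the integral equals
`log μ(1) - log μ(0) = 0`. The domination hypothesis makes `t ↦ E_{p_t}[log (p₁/p₀)]` integrable
(Fubini), which is what the fundamental theorem of calculus needs.
-/

open MeasureTheory Real Set

lemma rpow_le_rpow_add_rpow_of_mem_Icc {r a b c : ℝ} (hr : 0 < r) (hc : c ∈ Icc a b) :
    r ^ c ≤ r ^ a + r ^ b := by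
  rcases le_total 1 r with h | h
  · linarith [rpow_le_rpow_of_exponent_le h hc.2, rpow_pos_of_pos hr a]
  · linarith [rpow_le_rpow_of_exponent_ge hr h hc.1, rpow_pos_of_pos hr b]

lemma abs_log_mul_rpow_le {r a b u δ : ℝ} (hr : 0 < r) (hδ : 0 < δ) (hau : a + δ ≤ u)
    (hub : u ≤ b - δ) : |log r| * r ^ u ≤ δ⁻¹ * (r ^ a + r ^ b) := by
  rcases le_total 1 r with h | h
  · have hlog : |log r| ≤ r ^ δ / δ := by
      rw [abs_of_nonneg (log_nonneg h)]; exact log_le_rpow_div hr.le hδ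
    calc |log r| * r ^ u ≤ r ^ δ / δ * r ^ u := by gcongr
      _ = δ⁻¹ * r ^ (u + δ) := by rw [rpow_add hr]; ring
      _ ≤ δ⁻¹ * (r ^ a + r ^ b) := by
        gcongr
        linarith [rpow_le_rpow_of_exponent_le h (show u + δ ≤ b by linarith), rpow_pos_of_pos hr a]
  · have hlog : |log r| ≤ r ^ (-δ) / δ := by
      rw [abs_of_nonpos (log_nonpos hr.le h), ← log_inv, rpow_neg hr.le, ← inv_rpow hr.le]
      exact log_le_rpow_div (inv_pos.2 hr).le hδ
    calc |log r| * r ^ u ≤ r ^ (-δ) / δ * r ^ u := by gcongr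
      _ = δ⁻¹ * r ^ (u - δ) := by rw [sub_eq_neg_add, rpow_add hr]; ring
      _ ≤ δ⁻¹ * (r ^ a + r ^ b) := by
        gcongr
        linarith [rpow_le_rpow_of_exponent_ge hr h (show a ≤ u - δ by linarith),
          rpow_pos_of_pos hr b]

lemma rpow_mul_rpow_one_sub_eq {x y : ℝ} (hx : 0 < x) (hy : 0 < y) (u : ℝ) :
    x ^ u * y ^ (1 - u) = y * (x / y) ^ u := by
  rw [div_rpow hx.le hy.le, rpow_sub hy, rpow_one]
  field_simp

lemma hasDerivAt_rpow_mul_rpow_one_sub {x y : ℝ} (hx : 0 < x) (hy : 0 < y) (t : ℝ) :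
    HasDerivAt (fun u => x ^ u * y ^ (1 - u)) (x ^ t * y ^ (1 - t) * log (x / y)) t := by
  simp only [rpow_mul_rpow_one_sub_eq hx hy]
  simpa only [mul_assoc] using
    (hasStrictDerivAt_const_rpow (div_pos hx hy) t).hasDerivAt.const_mul y

lemma rpow_mul_rpow_one_sub_le_add {x y a b c : ℝ} (hx : 0 < x) (hy : 0 < y) (hc : c ∈ Icc a b) :
    x ^ c * y ^ (1 - c) ≤ x ^ a * y ^ (1 - a) + x ^ b * y ^ (1 - b) := by
  simp only [rpow_mul_rpow_one_sub_eq hx hy, ← mul_add]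
  exact mul_le_mul_of_nonneg_left (rpow_le_rpow_add_rpow_of_mem_Icc (div_pos hx hy) hc) hy.le

lemma rpow_mul_rpow_one_sub_mul_abs_log_le {x y a b u δ : ℝ} (hx : 0 < x) (hy : 0 < y)
    (hδ : 0 < δ) (hau : a + δ ≤ u) (hub : u ≤ b - δ) :
    x ^ u * y ^ (1 - u) * |log (x / y)| ≤
      δ⁻¹ * (x ^ a * y ^ (1 - a) + x ^ b * y ^ (1 - b)) := by
  simp only [rpow_mul_rpow_one_sub_eq hx hy]
  calc y * (x / y) ^ u * |log (x / y)| = y * (|log (x / y)| * (x / y) ^ u) := by ring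
    _ ≤ y * (δ⁻¹ * ((x / y) ^ a + (x / y) ^ b)) :=
      mul_le_mul_of_nonneg_left (abs_log_mul_rpow_le (div_pos hx hy) hδ hau hub) hy.le
    _ = _ := by ring

theorem integral_div_eq_log_sub_log {F f : ℝ → ℝ} {a b : ℝ} (hab : a ≤ b)
    (hF : ContinuousOn F (Icc a b)) (hpos : ∀ t ∈ Icc a b, 0 < F t)
    (hderiv : ∀ t ∈ Ioo a b, HasDerivAt F (f t) t)
    (hint : IntervalIntegrable (fun t => f t / F t) volume a b) :
    ∫ t in a..b, f t / F t = log (F b) - log (F a) :=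
  intervalIntegral.integral_eq_sub_of_hasDeriv_right_of_le hab
    (fun t ht => (continuousAt_log (hpos t ht).ne').comp_continuousWithinAt (hF t ht))
    (fun t ht => ((hderiv t ht).log (hpos t (Ioo_subset_Icc_self ht)).ne').hasDerivWithinAt) hint

section GeometricPath

variable {Θ : Type*} [MeasurableSpace Θ] {ν : Measure Θ} {p0 p1 : Θ → ℝ} {a b : ℝ}

lemma aestronglyMeasurable_rpow_mul_rpow (hp0 : AEMeasurable p0 ν) (hp1 : AEMeasurable p1 ν)
    (t : ℝ) : AEStronglyMeasurable (fun θ => p1 θ ^ t * p0 θ ^ (1 - t)) ν :=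
  ((hp1.pow_const t).mul (hp0.pow_const (1 - t))).aestronglyMeasurable

lemma ae_norm_rpow_mul_rpow_le (hp0 : ∀ᵐ θ ∂ν, 0 < p0 θ) (hp1 : ∀ᵐ θ ∂ν, 0 < p1 θ) {t : ℝ}
    (ht : t ∈ Icc a b) :
    ∀ᵐ θ ∂ν, ‖p1 θ ^ t * p0 θ ^ (1 - t)‖ ≤
      p1 θ ^ a * p0 θ ^ (1 - a) + p1 θ ^ b * p0 θ ^ (1 - b) := by
  filter_upwards [hp0, hp1] with θ h0 h1
  rw [norm_of_nonneg (by positivity)]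
  exact rpow_mul_rpow_one_sub_le_add h1 h0 ht

theorem continuousOn_integral_rpow_mul_rpow (hp0m : AEMeasurable p0 ν)
    (hp1m : AEMeasurable p1 ν) (hp0 : ∀ᵐ θ ∂ν, 0 < p0 θ) (hp1 : ∀ᵐ θ ∂ν, 0 < p1 θ)
    (ha : Integrable (fun θ => p1 θ ^ a * p0 θ ^ (1 - a)) ν)
    (hb : Integrable (fun θ => p1 θ ^ b * p0 θ ^ (1 - b)) ν) :
    ContinuousOn (fun t => ∫ θ, p1 θ ^ t * p0 θ ^ (1 - t) ∂ν) (Icc a b) := by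
  refine continuousOn_of_dominated (fun t _ => aestronglyMeasurable_rpow_mul_rpow hp0m hp1m t)
    (fun t ht => ae_norm_rpow_mul_rpow_le hp0 hp1 ht) (ha.add hb) ?_
  filter_upwards [hp0, hp1] with θ h0 h1
  exact fun t _ => (hasDerivAt_rpow_mul_rpow_one_sub h1 h0 t).continuousAt.continuousWithinAt

theorem hasDerivAt_integral_rpow_mul_rpow (hp0m : AEMeasurable p0 ν)
    (hp1m : AEMeasurable p1 ν) (hp0 : ∀ᵐ θ ∂ν, 0 < p0 θ) (hp1 : ∀ᵐ θ ∂ν, 0 < p1 θ)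
    (ha : Integrable (fun θ => p1 θ ^ a * p0 θ ^ (1 - a)) ν)
    (hb : Integrable (fun θ => p1 θ ^ b * p0 θ ^ (1 - b)) ν) {t : ℝ} (ht : t ∈ Ioo a b) :
    HasDerivAt (fun s => ∫ θ, p1 θ ^ s * p0 θ ^ (1 - s) ∂ν)
      (∫ θ, p1 θ ^ t * p0 θ ^ (1 - t) * log (p1 θ / p0 θ) ∂ν) t := by
  obtain ⟨δ, hδ, hδa, hδb⟩ : ∃ δ > 0, a + 2 * δ ≤ t ∧ t + 2 * δ ≤ b :=
    ⟨min (t - a) (b - t) / 2, by have := ht.1; have := ht.2; positivity,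
      by linarith [min_le_left (t - a) (b - t)], by linarith [min_le_right (t - a) (b - t)]⟩
  have hGt : Integrable (fun θ => p1 θ ^ t * p0 θ ^ (1 - t)) ν :=
    (ha.add hb).mono' (aestronglyMeasurable_rpow_mul_rpow hp0m hp1m t)
      (ae_norm_rpow_mul_rpow_le hp0 hp1 (Ioo_subset_Icc_self ht))
  refine (hasDerivAt_integral_of_dominated_loc_of_deriv_le (Metric.ball_mem_nhds t hδ)
    (.of_forall (aestronglyMeasurable_rpow_mul_rpow hp0m hp1m)) hGt
    (F' := fun s θ => p1 θ ^ s * p0 θ ^ (1 - s) * log (p1 θ / p0 θ))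
    (hGt.1.mul (hp1m.div hp0m).log.aestronglyMeasurable)
    (bound := fun θ => δ⁻¹ * (p1 θ ^ a * p0 θ ^ (1 - a) + p1 θ ^ b * p0 θ ^ (1 - b)))
    ?_ ((ha.add hb).const_mul _) ?_).2
  · filter_upwards [hp0, hp1] with θ h0 h1 s hs
    rw [Real.ball_eq_Ioo] at hs
    rw [norm_mul, norm_of_nonneg (by positivity), Real.norm_eq_abs]
    exact rpow_mul_rpow_one_sub_mul_abs_log_le h1 h0 hδ (by linarith [hs.1]) (by linarith [hs.2])
  · filter_upwards [hp0, hp1] with θ h0 h1 s _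
    exact hasDerivAt_rpow_mul_rpow_one_sub h1 h0 s

theorem integrable_prod_rpow_mul_rpow_div_mul_log_of_abs [SFinite ν] {τ : Measure ℝ} [SFinite τ]
    {w : ℝ → ℝ} (hp0m : AEMeasurable p0 ν) (hp1m : AEMeasurable p1 ν)
    (hp0 : ∀ᵐ θ ∂ν, 0 < p0 θ) (hp1 : ∀ᵐ θ ∂ν, 0 < p1 θ)
    (hwm : AEMeasurable w τ) (hw : ∀ᵐ t ∂τ, 0 < w t)
    (h : Integrable (fun x : ℝ × Θ =>
      p1 x.2 ^ x.1 * p0 x.2 ^ (1 - x.1) / w x.1 * |log (p1 x.2 / p0 x.2)|) (τ.prod ν)) :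
    Integrable (fun x : ℝ × Θ =>
      p1 x.2 ^ x.1 * p0 x.2 ^ (1 - x.1) / w x.1 * log (p1 x.2 / p0 x.2)) (τ.prod ν) := by
  have hfst := Measure.quasiMeasurePreserving_fst (μ := τ) (ν := ν)
  have hsnd := Measure.quasiMeasurePreserving_snd (μ := τ) (ν := ν)
  have hp0m' := hp0m.comp_quasiMeasurePreserving hsnd
  have hp1m' := hp1m.comp_quasiMeasurePreserving hsnd
  refine h.mono' ?_ ?_
  · exact ((((hp1m'.pow measurable_fst.aemeasurable).mul (hp0m'.pow
      (measurable_fst.aemeasurable.const_sub 1))).div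
      (hwm.comp_quasiMeasurePreserving hfst)).mul (hp1m'.div hp0m').log).aestronglyMeasurable
  · filter_upwards [hsnd.ae hp0, hsnd.ae hp1, hfst.ae hw] with x h0 h1 hwx
    rw [norm_mul, norm_of_nonneg (by positivity), Real.norm_eq_abs]

theorem integral_integral_rpow_mul_rpow_div_mul_log {μc : ℝ → ℝ} (hab : a ≤ b)
    (hp0m : AEMeasurable p0 ν) (hp1m : AEMeasurable p1 ν)
    (hp0 : ∀ᵐ θ ∂ν, 0 < p0 θ) (hp1 : ∀ᵐ θ ∂ν, 0 < p1 θ)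
    (ha : Integrable (fun θ => p1 θ ^ a * p0 θ ^ (1 - a)) ν)
    (hb : Integrable (fun θ => p1 θ ^ b * p0 θ ^ (1 - b)) ν)
    (hμc : ∀ t, μc t = ∫ θ, p1 θ ^ t * p0 θ ^ (1 - t) ∂ν) (hpos : ∀ t ∈ Icc a b, 0 < μc t)
    (hint : IntervalIntegrable
      (fun t => ∫ θ, p1 θ ^ t * p0 θ ^ (1 - t) / μc t * log (p1 θ / p0 θ) ∂ν) volume a b) :
    ∫ t in a..b, ∫ θ, p1 θ ^ t * p0 θ ^ (1 - t) / μc t * log (p1 θ / p0 θ) ∂ν =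
      log (μc b) - log (μc a) := by
  obtain rfl : μc = fun t => ∫ θ, p1 θ ^ t * p0 θ ^ (1 - t) ∂ν := funext hμc
  simp_rw [div_mul_eq_mul_div, integral_div] at hint ⊢
  exact integral_div_eq_log_sub_log hab
    (continuousOn_integral_rpow_mul_rpow hp0m hp1m hp0 hp1 ha hb) hpos
    (fun t ht => hasDerivAt_integral_rpow_mul_rpow hp0m hp1m hp0 hp1 ha hb ht) hint

theorem integral_mul_log_mul_div_mul_of_integral_eq_one {w : Θ → ℝ} {z0 z1 : ℝ} (hz0 : 0 < z0)
    (hz1 : 0 < z1)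
    (hp0 : ∀ᵐ θ ∂ν, 0 < p0 θ) (hp1 : ∀ᵐ θ ∂ν, 0 < p1 θ) (hw : Integrable w ν)
    (hwlog : Integrable (fun θ => w θ * log (p1 θ / p0 θ)) ν) (hw1 : ∫ θ, w θ ∂ν = 1) :
    ∫ θ, w θ * log (z1 * p1 θ / (z0 * p0 θ)) ∂ν =
      log (z1 / z0) + ∫ θ, w θ * log (p1 θ / p0 θ) ∂ν := by
  have hsplit : ∀ᵐ θ ∂ν, w θ * log (z1 * p1 θ / (z0 * p0 θ)) =
      log (z1 / z0) * w θ + w θ * log (p1 θ / p0 θ) := by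
    filter_upwards [hp0, hp1] with θ h0 h1
    rw [mul_div_mul_comm, log_mul (div_pos hz1 hz0).ne' (div_pos h1 h0).ne']
    ring
  rw [integral_congr_ae hsplit, integral_add (hw.const_mul _) hwlog, integral_const_mul, hw1,
    mul_one]

end GeometricPath

/-- Thermodynamic integration identity for geometric paths:
`log(z₁/z₀) = ∫₀¹ ∫ p_t(θ) log(q₁(θ)/q₀(θ)) dν dt`. -/
theorem thermodynamic_integration_identity
    {Θ : Type*} [MeasurableSpace Θ] (ν : Measure Θ) [SigmaFinite ν]
    (p0 p1 : Θ → ℝ)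
    (hp0pos : ∀ᵐ θ ∂ν, 0 < p0 θ) (hp1pos : ∀ᵐ θ ∂ν, 0 < p1 θ)
    (hp0int : ∫ θ, p0 θ ∂ν = 1) (hp1int : ∫ θ, p1 θ ∂ν = 1)
    (z0 z1 : ℝ) (hz0 : 0 < z0) (hz1 : 0 < z1)
    (μc : ℝ → ℝ) (hμc : ∀ t, μc t = ∫ θ, p1 θ ^ t * p0 θ ^ (1 - t) ∂ν)
    (hμint : ∀ t ∈ Set.Icc (0:ℝ) 1,
      Integrable (fun θ => p1 θ ^ t * p0 θ ^ (1 - t)) ν)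
    (hμpos : ∀ t ∈ Set.Icc (0:ℝ) 1, 0 < μc t)
    (hdom : Integrable
      (fun x : ℝ × Θ =>
        (p1 x.2 ^ x.1 * p0 x.2 ^ (1 - x.1) / μc x.1) * |Real.log (p1 x.2 / p0 x.2)|)
      ((volume.restrict (Set.Icc (0:ℝ) 1)).prod ν)) :
    Real.log (z1 / z0)
      = ∫ t in (0:ℝ)..1, ∫ θ,
          (p1 θ ^ t * p0 θ ^ (1 - t) / μc t)
            * Real.log ((z1 * p1 θ) / (z0 * p0 θ)) ∂ν := by
  have h0 := hμint 0 (by simp)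
  have h1 := hμint 1 (by simp)
  have hp0m : AEMeasurable p0 ν := by simpa using h0.aemeasurable
  have hp1m : AEMeasurable p1 ν := by simpa using h1.aemeasurable
  have hcont : ContinuousOn μc (Icc 0 1) :=
    (continuousOn_integral_rpow_mul_rpow hp0m hp1m hp0pos hp1pos h0 h1).congr fun t _ => hμc t
  have hprod := integrable_prod_rpow_mul_rpow_div_mul_log_of_abs hp0m hp1m hp0pos hp1pos
    (hcont.aemeasurable measurableSet_Icc) (ae_restrict_of_forall_mem measurableSet_Icc hμpos) hdom
  have hII := (intervalIntegrable_iff_integrableOn_Icc_of_le zero_le_one).2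
    hprod.integral_prod_left
  have hsplit : ∀ᵐ t, t ∈ uIoc (0:ℝ) 1 →
      ∫ θ, p1 θ ^ t * p0 θ ^ (1 - t) / μc t * log (z1 * p1 θ / (z0 * p0 θ)) ∂ν =
        log (z1 / z0) + ∫ θ, p1 θ ^ t * p0 θ ^ (1 - t) / μc t * log (p1 θ / p0 θ) ∂ν := by
    filter_upwards [(ae_restrict_iff' measurableSet_Icc).1 hprod.prod_right_ae] with t hint ht
    have ht' : t ∈ Icc (0:ℝ) 1 := Ioc_subset_Icc_self (by simpa [uIoc] using ht)
    refine integral_mul_log_mul_div_mul_of_integral_eq_one hz0 hz1 hp0pos hp1pos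
      ((hμint t ht').div_const _) (hint ht') ?_
    rw [integral_div, ← hμc, div_self (hμpos t ht').ne']
  rw [intervalIntegral.integral_congr_ae hsplit, intervalIntegral.integral_add
    intervalIntegrable_const hII, integral_integral_rpow_mul_rpow_div_mul_log zero_le_one
    hp0m hp1m hp0pos hp1pos h0 h1 hμc hμpos hII]
  simp [hμc, hp0int, hp1int]
end

section
/- (J-divergence and the secant slope) For any s, u ∈ [0,1], the symmetrized Kullback–Leibler (Jeffreys) divergence between the geometric-path densities p_s and p_u satisfies J(p_s, p_u) = KL(p_s ‖ p_u) + KL(p_u ‖ p_s) = (u − s)·(𝒦ℒ_u − 𝒦ℒ_s); equivalently, the slope of the secant of the curve t ↦ 𝒦ℒ_t between t = s and t = u equals J(p_s, p_u)/(u − s)². -/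
open MeasureTheory Real

/-- (J-divergence and the secant slope) The Jeffreys divergence between two geometric-path
densities satisfies `J(p_s, p_u) = (u − s)·(𝒦ℒ_u − 𝒦ℒ_s)`; equivalently, the slope of the
secant of `t ↦ 𝒦ℒ_t` between `s` and `u` equals `J(p_s, p_u)/(u − s)²`. -/
theorem J_divergence_secant_slope
    {Θ : Type*} [MeasurableSpace Θ] (ν : Measure Θ) [SigmaFinite ν]
    (p0 p1 : Θ → ℝ)
    (hp0pos : ∀ᵐ θ ∂ν, 0 < p0 θ) (hp1pos : ∀ᵐ θ ∂ν, 0 < p1 θ)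
    (hp0int : ∫ θ, p0 θ ∂ν = 1) (hp1int : ∫ θ, p1 θ ∂ν = 1)
    (μc : ℝ → ℝ) (hμc : ∀ t, μc t = ∫ θ, p1 θ ^ t * p0 θ ^ (1 - t) ∂ν)
    (hμint : ∀ t ∈ Set.Icc (0:ℝ) 1,
      Integrable (fun θ => p1 θ ^ t * p0 θ ^ (1 - t)) ν)
    (hμpos : ∀ t ∈ Set.Icc (0:ℝ) 1, 0 < μc t)
    (pt : ℝ → Θ → ℝ) (hpt : ∀ t θ, pt t θ = p1 θ ^ t * p0 θ ^ (1 - t) / μc t)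
    (KLf : ℝ → ℝ)
    (hKLf : ∀ t, KLf t = ∫ θ, pt t θ * Real.log (p1 θ / p0 θ) ∂ν)
    (hKLfin : ∀ t ∈ Set.Icc (0:ℝ) 1,
      Integrable (fun θ => pt t θ * Real.log (p1 θ / p0 θ)) ν)
    (s u : ℝ) (hs : s ∈ Set.Icc (0:ℝ) 1) (hu : u ∈ Set.Icc (0:ℝ) 1)
    (hKLsu : Integrable (fun θ => pt s θ * Real.log (pt s θ / pt u θ)) ν)
    (hKLus : Integrable (fun θ => pt u θ * Real.log (pt u θ / pt s θ)) ν) :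
    (∫ θ, pt s θ * Real.log (pt s θ / pt u θ) ∂ν)
        + (∫ θ, pt u θ * Real.log (pt u θ / pt s θ) ∂ν)
      = (u - s) * (KLf u - KLf s) ∧
    (u ≠ s →
      (KLf u - KLf s) / (u - s)
        = ((∫ θ, pt s θ * Real.log (pt s θ / pt u θ) ∂ν)
            + (∫ θ, pt u θ * Real.log (pt u θ / pt s θ) ∂ν)) / (u - s) ^ 2) := by
  have hμs := hμpos s hs
  have hμu := hμpos u hu
  -- integrability and normalization of pt t
  have hptint : ∀ t ∈ Set.Icc (0:ℝ) 1, Integrable (pt t) ν := by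
    intro t ht
    have : (pt t) = fun θ => (p1 θ ^ t * p0 θ ^ (1 - t)) / μc t := funext fun θ => hpt t θ
    rw [this]
    exact (hμint t ht).div_const _
  have hptone : ∀ t ∈ Set.Icc (0:ℝ) 1, ∫ θ, pt t θ ∂ν = 1 := by
    intro t ht
    simp only [hpt, integral_div]
    rw [← hμc t]
    exact div_self (hμpos t ht).ne'
  have hkey : ∀ a ∈ Set.Icc (0:ℝ) 1, ∀ b ∈ Set.Icc (0:ℝ) 1,
      (∫ θ, pt a θ * Real.log (pt a θ / pt b θ) ∂ν)
        = (a - b) * KLf a + Real.log (μc b / μc a) := by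
    intro a ha b hb
    have hμa := hμpos a ha
    have hμb := hμpos b hb
    have hcong : (fun θ => pt a θ * Real.log (pt a θ / pt b θ))
        =ᵐ[ν] fun θ => (a - b) * (pt a θ * Real.log (p1 θ / p0 θ))
            + Real.log (μc b / μc a) * pt a θ := by
      filter_upwards [hp0pos, hp1pos] with θ h0 h1
      have hpa : 0 < pt a θ := by
        rw [hpt]
        positivity
      have hpb : 0 < pt b θ := by
        rw [hpt]
        positivity
      have hla : Real.log (pt a θ) = a * Real.log (p1 θ) + (1 - a) * Real.log (p0 θ)
          - Real.log (μc a) := by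
        rw [hpt, Real.log_div (by positivity) hμa.ne', Real.log_mul (by positivity) (by positivity),
          Real.log_rpow h1, Real.log_rpow h0]
      have hlb : Real.log (pt b θ) = b * Real.log (p1 θ) + (1 - b) * Real.log (p0 θ)
          - Real.log (μc b) := by
        rw [hpt, Real.log_div (by positivity) hμb.ne', Real.log_mul (by positivity) (by positivity),
          Real.log_rpow h1, Real.log_rpow h0]
      rw [Real.log_div hpa.ne' hpb.ne', Real.log_div h1.ne' h0.ne',
        Real.log_div hμb.ne' hμa.ne', hla, hlb]
      ring
    rw [integral_congr_ae hcong,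
      integral_add ((hKLfin a ha).const_mul _) ((hptint a ha).const_mul _),
      integral_const_mul, integral_const_mul, hptone a ha, hKLf a]
    ring
  have h1 : (∫ θ, pt s θ * Real.log (pt s θ / pt u θ) ∂ν)
        + (∫ θ, pt u θ * Real.log (pt u θ / pt s θ) ∂ν)
      = (u - s) * (KLf u - KLf s) := by
    rw [hkey s hs u hu, hkey u hu s hs,
      Real.log_div hμu.ne' hμs.ne', Real.log_div hμs.ne' hμu.ne']
    ring
  refine ⟨h1, fun hne => ?_⟩
  rw [h1]
  have : u - s ≠ 0 := sub_ne_zero.mpr hne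
  field_simp
end

section
/- (Per-segment trapezoid decomposition of the log-ratio) For any s, u ∈ [0,1] with s < u, log(z_u/z_s) = ((u − s)/2)·(ℰ_s + ℰ_u) + (1/2)·(KL(p_s ‖ p_u) − KL(p_u ‖ p_s)), where ℰ_t = ∫_Θ p_t(θ) log(q₁(θ)/q₀(θ)) dν(θ); i.e., the exact log-ratio of normalizing constants along a segment of the geometric path equals the trapezium-rule term plus one half the asymmetry of the Kullback–Leibler divergences between the sampling distributions at the segment's endpoints. -/
open MeasureTheory Real

/-- (Per-segment trapezoid decomposition of the log-ratio) For `s < u` in `[0,1]`,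
`log(z_u/z_s) = ((u−s)/2)(ℰ_s + ℰ_u) + (1/2)(KL(p_s ‖ p_u) − KL(p_u ‖ p_s))`. -/
theorem log_ratio_trapezoid_decomposition
    {Θ : Type*} [MeasurableSpace Θ] (ν : Measure Θ) [SigmaFinite ν]
    (p0 p1 : Θ → ℝ)
    (hp0pos : ∀ᵐ θ ∂ν, 0 < p0 θ) (hp1pos : ∀ᵐ θ ∂ν, 0 < p1 θ)
    (hp0int : ∫ θ, p0 θ ∂ν = 1) (hp1int : ∫ θ, p1 θ ∂ν = 1)
    (z0 z1 : ℝ) (hz0 : 0 < z0) (hz1 : 0 < z1)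
    (qt : ℝ → Θ → ℝ)
    (hqt : ∀ t θ, qt t θ = (z1 * p1 θ) ^ t * (z0 * p0 θ) ^ (1 - t))
    (zf : ℝ → ℝ) (hzf : ∀ t, zf t = ∫ θ, qt t θ ∂ν)
    (hqint : ∀ t ∈ Set.Icc (0:ℝ) 1, Integrable (qt t) ν)
    (hzpos : ∀ t ∈ Set.Icc (0:ℝ) 1, 0 < zf t)
    (pt : ℝ → Θ → ℝ) (hpt : ∀ t θ, pt t θ = qt t θ / zf t)
    (E : ℝ → ℝ)
    (hE : ∀ t, E t = ∫ θ, pt t θ * Real.log ((z1 * p1 θ) / (z0 * p0 θ)) ∂ν)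
    (hEint : ∀ t ∈ Set.Icc (0:ℝ) 1,
      Integrable (fun θ => pt t θ * Real.log ((z1 * p1 θ) / (z0 * p0 θ))) ν)
    (s u : ℝ) (hs : s ∈ Set.Icc (0:ℝ) 1) (hu : u ∈ Set.Icc (0:ℝ) 1) (hsu : s < u)
    (hKLsu : Integrable (fun θ => pt s θ * Real.log (pt s θ / pt u θ)) ν)
    (hKLus : Integrable (fun θ => pt u θ * Real.log (pt u θ / pt s θ)) ν) :
    Real.log (zf u / zf s)
      = ((u - s) / 2) * (E s + E u)
        + (1 / 2) * ((∫ θ, pt s θ * Real.log (pt s θ / pt u θ) ∂ν)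
            - (∫ θ, pt u θ * Real.log (pt u θ / pt s θ) ∂ν)) := by
  -- normalization: ∫ pt t = 1
  have hptint : ∀ t ∈ Set.Icc (0:ℝ) 1, Integrable (pt t) ν := by
    intro t ht
    have : pt t = fun θ => qt t θ / zf t := funext fun θ => hpt t θ
    rw [this]
    exact (hqint t ht).div_const _
  have hnorm : ∀ t ∈ Set.Icc (0:ℝ) 1, ∫ θ, pt t θ ∂ν = 1 := by
    intro t ht
    have : ∫ θ, pt t θ ∂ν = (∫ θ, qt t θ ∂ν) / zf t := by
      simp only [hpt]; exact integral_div _ _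
    rw [this, ← hzf t, div_self (hzpos t ht).ne']
  -- key identity for the KL integrals
  have key : ∀ t₁ ∈ Set.Icc (0:ℝ) 1, ∀ t₂ ∈ Set.Icc (0:ℝ) 1,
      Integrable (fun θ => pt t₁ θ * Real.log (pt t₁ θ / pt t₂ θ)) ν →
      ∫ θ, pt t₁ θ * Real.log (pt t₁ θ / pt t₂ θ) ∂ν
        = (t₁ - t₂) * E t₁ + Real.log (zf t₂ / zf t₁) := by
    intro t₁ ht₁ t₂ ht₂ _
    have hz₁ := hzpos t₁ ht₁
    have hz₂ := hzpos t₂ ht₂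
    have hae : ∀ᵐ θ ∂ν, pt t₁ θ * Real.log (pt t₁ θ / pt t₂ θ)
        = (t₁ - t₂) * (pt t₁ θ * Real.log ((z1 * p1 θ) / (z0 * p0 θ)))
          + Real.log (zf t₂ / zf t₁) * pt t₁ θ := by
      filter_upwards [hp0pos, hp1pos] with θ h0 h1
      have hq1 : 0 < z1 * p1 θ := mul_pos hz1 h1
      have hq0 : 0 < z0 * p0 θ := mul_pos hz0 h0
      have hqpos : ∀ t : ℝ, 0 < qt t θ := fun t => by
        rw [hqt]; exact mul_pos (Real.rpow_pos_of_pos hq1 t) (Real.rpow_pos_of_pos hq0 _)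
      have hlogq : ∀ t : ℝ, Real.log (qt t θ)
          = t * Real.log (z1 * p1 θ) + (1 - t) * Real.log (z0 * p0 θ) := fun t => by
        rw [hqt, Real.log_mul (Real.rpow_pos_of_pos hq1 t).ne' (Real.rpow_pos_of_pos hq0 _).ne',
          Real.log_rpow hq1, Real.log_rpow hq0]
      have hratio : pt t₁ θ / pt t₂ θ = (qt t₁ θ / qt t₂ θ) * (zf t₂ / zf t₁) := by
        rw [hpt, hpt]; field_simp
      have hlograt : Real.log (pt t₁ θ / pt t₂ θ)
          = (t₁ - t₂) * Real.log ((z1 * p1 θ) / (z0 * p0 θ)) + Real.log (zf t₂ / zf t₁) := by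
        rw [hratio, Real.log_mul (div_pos (hqpos t₁) (hqpos t₂)).ne'
            (div_pos hz₂ hz₁).ne', Real.log_div (hqpos t₁).ne' (hqpos t₂).ne',
          hlogq, hlogq, Real.log_div hq1.ne' hq0.ne']
        ring
      rw [hlograt]; ring
    rw [integral_congr_ae hae,
      integral_add (((hEint t₁ ht₁).const_mul _)) ((hptint t₁ ht₁).const_mul _),
      integral_const_mul, integral_const_mul, hnorm t₁ ht₁, ← hE]
    ring
  have A := key s hs u hu hKLsu
  have B := key u hu s hs hKLus
  rw [A, B]
  have hlog : Real.log (zf s / zf u) = - Real.log (zf u / zf s) := by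
    rw [Real.log_div (hzpos s hs).ne' (hzpos u hu).ne',
      Real.log_div (hzpos u hu).ne' (hzpos s hs).ne']
    ring
  rw [hlog]; ring
end
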